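/- Let ν be a probability measure on ℝ^d with log-Laplace L, let (K_n) be a nondecreasing sequence of compact sets whose union is ℝ^d, and let L_n be the log-Laplace of the conditioned measure ν(·|K_n). Then for every λ ∈ ℝ^d and every sequence λ_n → λ, one has liminf_n L_n(λ_n) ≥ L(λ); moreover lim_n L_n(λ) = L(λ). In particular (L_n) Mosco converges to L. -/

import Mathlib

open MeasureTheory ENNReal Filter Topology
open scoped RealInnerProductSpace

/-- The log-Laplace transform of a measure on `ℝ^d`, with values in `EReal`
(so that it equals `+∞` when the integral is infinite). -/
noncomputable def logLaplace {d : ℕ} (ν : Measure (EuclideanSpace ℝ (Fin d)))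
    (l : EuclideanSpace ℝ (Fin d)) : EReal :=
  ENNReal.log (∫⁻ z, ENNReal.ofReal (Real.exp ⟪l, z⟫) ∂ν)

/-!
Conditioning `ν` on `K n` multiplies the truncated integral `∫_{K n}` by `ν (K n)⁻¹ ≥ 1`, so
Fatou's lemma applied to the truncated integrands gives the liminf inequality, while
`ν (K n)⁻¹ → 1` and `∫_{K n} ≤ ∫` give the matching limsup bound at a fixed point. Both pass
through the order isomorphism `ENNReal.log : ℝ≥0∞ ≃o EReal`.
-/

namespace ENNReal

theorem log_liminf {ι : Type*} {f : Filter ι} (u : ι → ℝ≥0∞) :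
    log (liminf u f) = liminf (fun i => log (u i)) f :=
  logOrderIso.liminf_apply

end ENNReal

theorem eventually_mem_of_monotone_of_iUnion_eq_univ {α : Type*} {s : ℕ → Set α}
    (hmono : Monotone s) (hunion : ⋃ n, s n = Set.univ) (x : α) : ∀ᶠ n in atTop, x ∈ s n := by
  obtain ⟨m, hm⟩ := Set.mem_iUnion.1 (hunion ▸ Set.mem_univ x)
  filter_upwards [eventually_ge_atTop m] with n hn using hmono hn hm

namespace ProbabilityTheory

variable {Ω : Type*} [MeasurableSpace Ω] {μ : Measure Ω} {s : ℕ → Set Ω}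

theorem restrict_le_cond [IsZeroOrProbabilityMeasure μ] (t : Set Ω) : μ.restrict t ≤ μ[|t] :=
  calc μ.restrict t = (1 : ℝ≥0∞) • μ.restrict t := (one_smul _ _).symm
    _ ≤ (μ t)⁻¹ • μ.restrict t := by gcongr; exact ENNReal.one_le_inv.2 prob_le_one

theorem lintegral_le_liminf_lintegral_cond [IsZeroOrProbabilityMeasure μ]
    (hs : ∀ n, MeasurableSet (s n)) (hcover : ∀ x, ∀ᶠ n in atTop, x ∈ s n)
    {f : ℕ → Ω → ℝ≥0∞} {g : Ω → ℝ≥0∞} (hf : ∀ n, AEMeasurable (f n) μ)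
    (hfg : ∀ x, Tendsto (fun n => f n x) atTop (𝓝 (g x))) :
    ∫⁻ x, g x ∂μ ≤ liminf (fun n => ∫⁻ x, f n x ∂μ[|s n]) atTop := by
  have htrunc : ∀ x, Tendsto (fun n => (s n).indicator (f n) x) atTop (𝓝 (g x)) := fun x =>
    (hfg x).congr' <| (hcover x).mono fun n hn => (Set.indicator_of_mem hn _).symm
  calc ∫⁻ x, g x ∂μ = ∫⁻ x, liminf (fun n => (s n).indicator (f n) x) atTop ∂μ := by
        simp_rw [fun x => (htrunc x).liminf_eq]
    _ ≤ liminf (fun n => ∫⁻ x, (s n).indicator (f n) x ∂μ) atTop :=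
        lintegral_liminf_le' fun n => (hf n).indicator (hs n)
    _ = liminf (fun n => ∫⁻ x in s n, f n x ∂μ) atTop := by
        simp_rw [lintegral_indicator (hs _)]
    _ ≤ liminf (fun n => ∫⁻ x, f n x ∂μ[|s n]) atTop :=
        liminf_le_liminf <| .of_forall fun n => lintegral_mono' (restrict_le_cond _) le_rfl

variable [IsProbabilityMeasure μ]

theorem limsup_lintegral_cond_le (hmono : Monotone s) (hunion : ⋃ n, s n = Set.univ)
    (f : Ω → ℝ≥0∞) : limsup (fun n => ∫⁻ x, f x ∂μ[|s n]) atTop ≤ ∫⁻ x, f x ∂μ := by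
  have hinv : Tendsto (fun n => (μ (s n))⁻¹) atTop (𝓝 1) := by
    simpa [hunion] using tendsto_inv_iff.2 (tendsto_measure_iUnion_atTop (μ := μ) hmono)
  calc limsup (fun n => ∫⁻ x, f x ∂μ[|s n]) atTop
      ≤ limsup (fun n => (μ (s n))⁻¹ * ∫⁻ x, f x ∂μ) atTop := by
        refine limsup_le_limsup (.of_forall fun n => ?_)
        simp only [cond, lintegral_smul_measure, smul_eq_mul]
        gcongr
        exact Measure.restrict_le_self
    _ = ∫⁻ x, f x ∂μ := by
        simpa using (ENNReal.Tendsto.mul_const hinv (.inl one_ne_zero)).limsup_eq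

theorem tendsto_lintegral_cond (hs : ∀ n, MeasurableSet (s n)) (hmono : Monotone s)
    (hunion : ⋃ n, s n = Set.univ) {f : Ω → ℝ≥0∞} (hf : AEMeasurable f μ) :
    Tendsto (fun n => ∫⁻ x, f x ∂μ[|s n]) atTop (𝓝 (∫⁻ x, f x ∂μ)) :=
  tendsto_of_le_liminf_of_limsup_le
    (lintegral_le_liminf_lintegral_cond hs
      (eventually_mem_of_monotone_of_iUnion_eq_univ hmono hunion) (fun _ => hf)
      fun _ => tendsto_const_nhds)
    (limsup_lintegral_cond_le hmono hunion f)

end ProbabilityTheory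

open ProbabilityTheory

theorem mosco_convergence_of_conditioned_logLaplace {d : ℕ}
    (ν : Measure (EuclideanSpace ℝ (Fin d))) [IsProbabilityMeasure ν]
    (K : ℕ → Set (EuclideanSpace ℝ (Fin d))) (hK : ∀ n, IsCompact (K n))
    (hmono : Monotone K) (hunion : (⋃ n, K n) = Set.univ) :
    (∀ (l : EuclideanSpace ℝ (Fin d)) (ls : ℕ → EuclideanSpace ℝ (Fin d)),
        Tendsto ls atTop (𝓝 l) →
        logLaplace ν l ≤ liminf (fun n => logLaplace (ProbabilityTheory.cond ν (K n)) (ls n)) atTop) ∧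
    (∀ l : EuclideanSpace ℝ (Fin d),
        Tendsto (fun n => logLaplace (ProbabilityTheory.cond ν (K n)) l) atTop (𝓝 (logLaplace ν l))) := by
  have hKm : ∀ n, MeasurableSet (K n) := fun n => (hK n).isClosed.measurableSet
  refine ⟨fun l ls hls => ?_, fun l => ?_⟩
  · unfold logLaplace
    rw [← ENNReal.log_liminf]
    refine ENNReal.log_monotone (lintegral_le_liminf_lintegral_cond hKm
      (eventually_mem_of_monotone_of_iUnion_eq_univ hmono hunion) (fun _ => by fun_prop)
      fun z => ?_)
    have hcont : Continuous fun l' : EuclideanSpace ℝ (Fin d) => ENNReal.ofReal (Real.exp ⟪l', z⟫) :=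
      ENNReal.continuous_ofReal.comp (by fun_prop)
    exact (hcont.tendsto l).comp hls
  · exact (ENNReal.continuous_log.tendsto _).comp (tendsto_lintegral_cond hKm hmono hunion (by fun_prop))
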